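/- For each 1 ≤ j ≤ d and every n ≥ 0: E[Y_j − π1] = θ·x_n and E[(Y_j − π1)²] = θ·z_n + π1·(1−θ)·x_n. -/

import Mathlib

open Finset Filter

namespace AsymIsing

/-- Level-`k` vertices of the rooted `d`-ary tree: paths of length `k` from the root. -/
abbrev Vert (d k : ℕ) : Type := Fin k → Fin d

/-- A spin configuration on levels `0, …, n` of the `d`-ary tree. -/
abbrev Conf (d n : ℕ) : Type := ∀ k : Fin (n + 1), Vert d k → Fin 2

/-- A spin configuration on level `n` only. -/
abbrev LConf (d n : ℕ) : Type := Vert d n → Fin 2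

/-- The transition matrix of the asymmetric binary channel; the paper's state `1`
corresponds to the index `0` and the state `2` to the index `1`. -/
noncomputable def Mmat (θ Δ : ℝ) : Fin 2 → Fin 2 → ℝ := fun i j =>
  if i = 0 then (if j = 0 then (1 + θ - Δ) / 2 else (1 - θ + Δ) / 2)
  else (if j = 0 then (1 - θ - Δ) / 2 else (1 + θ + Δ) / 2)

/-- The stationary distribution `π = (π₁, π₂)` of the channel. -/
noncomputable def pst (θ Δ : ℝ) : Fin 2 → ℝ := fun i =>
  if i = 0 then 1 / 2 - Δ / (2 * (1 - θ)) else 1 / 2 + Δ / (2 * (1 - θ))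

/-- The root spin of a configuration. -/
def root {d n : ℕ} (σ : Conf d n) : Fin 2 := σ ⟨0, n.succ_pos⟩ (fun i => i.elim0)

/-- The restriction of a configuration to the last (`n`-th) level. -/
def top {d n : ℕ} (σ : Conf d n) : LConf d n := σ (Fin.last n)

/-- The probability of a full configuration on levels `0, …, n` under the broadcast
process: the root is drawn from `π` and spins propagate along edges via `M`. -/
noncomputable def confProb (d : ℕ) (θ Δ : ℝ) (n : ℕ) (σ : Conf d n) : ℝ :=
  pst θ Δ (root σ) *
    ∏ k : Fin n, ∏ v : Vert d (k + 1),
      Mmat θ Δ (σ k.castSucc (v ∘ Fin.castSucc)) (σ k.succ v)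

/-- `P(σ(n) = A)`: the marginal law of the level-`n` spins. -/
noncomputable def levelProb (d : ℕ) (θ Δ : ℝ) (n : ℕ) (A : LConf d n) : ℝ :=
  ∑ σ : Conf d n, if top σ = A then confProb d θ Δ n σ else 0

/-- `P(σ_ρ = i, σ(n) = A)`. -/
noncomputable def jointProb (d : ℕ) (θ Δ : ℝ) (n : ℕ) (i : Fin 2) (A : LConf d n) : ℝ :=
  ∑ σ : Conf d n, if root σ = i ∧ top σ = A then confProb d θ Δ n σ else 0

/-- The posterior `f_n(i, A) = P(σ_ρ = i ∣ σ(n) = A)`. -/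
noncomputable def post (d : ℕ) (θ Δ : ℝ) (n : ℕ) (i : Fin 2) (A : LConf d n) : ℝ :=
  jointProb d θ Δ n i A / levelProb d θ Δ n A

/-- The law of `σ^i(n)`, i.e. `P(σ(n) = A ∣ σ_ρ = i)`. -/
noncomputable def condLevel (d : ℕ) (θ Δ : ℝ) (n : ℕ) (i : Fin 2) (A : LConf d n) : ℝ :=
  jointProb d θ Δ n i A / pst θ Δ i

/-- The total variation distance between `σ^1(n)` and `σ^2(n)`. -/
noncomputable def tvDist (d : ℕ) (θ Δ : ℝ) (n : ℕ) : ℝ :=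
  (1 / 2) * ∑ A : LConf d n, |condLevel d θ Δ n 0 A - condLevel d θ Δ n 1 A|

/-- The reconstruction problem is solvable if `limsup_n d_TV(σ^1(n), σ^2(n)) > 0`. -/
def solvable (d : ℕ) (θ Δ : ℝ) : Prop :=
  0 < Filter.limsup (fun n => tvDist d θ Δ n) Filter.atTop

/-- Non-reconstruction: `limsup_n d_TV(σ^1(n), σ^2(n)) = 0`. -/
def nonReconstruction (d : ℕ) (θ Δ : ℝ) : Prop :=
  Filter.limsup (fun n => tvDist d θ Δ n) Filter.atTop = 0

/-- Expectation of a function of the level-`n` configuration, conditioned on `σ_ρ = 1`. -/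
noncomputable def expect1 (d : ℕ) (θ Δ : ℝ) (n : ℕ) (g : LConf d n → ℝ) : ℝ :=
  ∑ A : LConf d n, condLevel d θ Δ n 0 A * g A

/-- `x_n = E f_n(1, σ^1(n)) − π₁`. -/
noncomputable def xseq (d : ℕ) (θ Δ : ℝ) (n : ℕ) : ℝ :=
  expect1 d θ Δ n (fun A => post d θ Δ n 0 A) - pst θ Δ 0

/-- `z_n = E (f_n(1, σ^1(n)) − π₁)²`. -/
noncomputable def zseq (d : ℕ) (θ Δ : ℝ) (n : ℕ) : ℝ :=
  expect1 d θ Δ n (fun A => (post d θ Δ n 0 A - pst θ Δ 0) ^ 2)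

/-- The restriction of a level-`(n+1)` configuration to the subtree of the `j`-th
child of the root (paths starting with `j`). -/
def restrictChild {d n : ℕ} (j : Fin d) (A : LConf d (n + 1)) : LConf d n :=
  fun w => A (Fin.cons j w)

/-- `Y_j = f_n(1, σ_j(n+1))`, as a function of the level-`(n+1)` configuration. -/
noncomputable def Yfun (d : ℕ) (θ Δ : ℝ) (n : ℕ) (j : Fin d) (A : LConf d (n + 1)) : ℝ :=
  post d θ Δ n 0 (restrictChild j A)

/-- `Z₁ = ∏_j (1 + (θ/π₁)(Y_j − π₁))`, as a function of the level-`(n+1)` configuration. -/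
noncomputable def Z1fun (d : ℕ) (θ Δ : ℝ) (n : ℕ) (A : LConf d (n + 1)) : ℝ :=
  ∏ j : Fin d, (1 + (θ / pst θ Δ 0) * (Yfun d θ Δ n j A - pst θ Δ 0))

/-- `Z₂ = ∏_j (1 − (θ/π₂)(Y_j − π₁))`, as a function of the level-`(n+1)` configuration. -/
noncomputable def Z2fun (d : ℕ) (θ Δ : ℝ) (n : ℕ) (A : LConf d (n + 1)) : ℝ :=
  ∏ j : Fin d, (1 - (θ / pst θ Δ 1) * (Yfun d θ Δ n j A - pst θ Δ 0))

/-- The value of `Δ` making `π = (π₁, π₂)` the stationary distribution of the channel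
with second eigenvalue `θ`, namely `Δ = (1 − θ)(π₂ − π₁)`. -/
noncomputable def Dlt (θ π1 π2 : ℝ) : ℝ := (1 - θ) * (π2 - π1)

/-- The Gaussian-approximation function
`f(s) = E[π₁ e^{sμ₁+√s W₁} / (π₁ e^{sμ₁+√s W₁} + π₂ e^{sμ₂+√s W₂})] − π₁`,
where `μ₁ = 1/(2π₁)`, `μ₂ = −(1+π₂)/(2π₂²)`, `W₁ ∼ N(0, 1/π₁)` (realized as `w/√π₁`
for `w` standard Gaussian) and `W₂ = −(π₁/π₂)·W₁`. -/
noncomputable def gfun (π1 π2 : ℝ) (s : ℝ) : ℝ :=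
  (∫ w : ℝ,
      (π1 * Real.exp (s * (1 / (2 * π1)) + Real.sqrt s * (w / Real.sqrt π1))) /
        (π1 * Real.exp (s * (1 / (2 * π1)) + Real.sqrt s * (w / Real.sqrt π1)) +
          π2 * Real.exp (s * (-(1 + π2) / (2 * π2 ^ 2)) +
            Real.sqrt s * (-(π1 / π2) * (w / Real.sqrt π1))))
    ∂(ProbabilityTheory.gaussianReal 0 1)) - π1

/-!
Under `σ_ρ = 1` the subtrees of the children are independent, and each child is in state `k`
with probability `M₁ₖ = θ·[k = 1] + (1 − θ)·π_k`. Hence the law of `σ_j¹(n+1)` is the mixture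
`θ·law(σ¹(n)) + (1 − θ)·law(σ(n))`, so every moment of `Y_j` is `θ` times the moment of
`X⁺(n)` plus `1 − θ` times the moment of `X₁(n)`. For the unconditioned law the posterior
reweights: `E[X₁(n)·h(X₁(n))] = π₁·E[h(X⁺(n))]`, which gives `E[X₁(n) − π₁] = 0` and
`E[(X₁(n) − π₁)²] = π₁·x_n`.
-/

end AsymIsing

lemma Fintype.sum_pi_prod_mul_apply {ι α R : Type*} [Fintype ι] [DecidableEq ι] [Fintype α]
    [CommSemiring R] (q : ι → α → R) (hq : ∀ i, ∑ a, q i a = 1) (g : α → R) (j : ι) :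
    ∑ f : ι → α, (∏ i, q i (f i)) * g (f j) = ∑ a, q j a * g a := by
  have hsplit : ∀ f : ι → α,
      (∏ i, q i (f i)) * g (f j) = ∏ i, q i (f i) * if i = j then g (f i) else 1 := by
    intro f
    rw [Finset.prod_mul_distrib, Fintype.prod_ite_eq']
  simp_rw [hsplit]
  rw [← Fintype.prod_sum fun i a => q i a * if i = j then g a else 1,
    Fintype.prod_eq_single j fun i hi => by simp [hi, hq]]
  simp

namespace AsymIsing

section Channel

variable (θ Δ : ℝ)

lemma Mmat_row_sum (i : Fin 2) : ∑ k, Mmat θ Δ i k = 1 := by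
  fin_cases i <;> simp [Fin.sum_univ_two, Mmat] <;> ring

lemma Mmat_zero_one_add_Mmat_one_zero : Mmat θ Δ 0 1 + Mmat θ Δ 1 0 = 1 - θ := by
  simp [Mmat]
  ring

lemma sum_pst : ∑ i, pst θ Δ i = 1 := by
  simp [Fin.sum_univ_two, pst]
  ring

variable {θ Δ}

lemma one_sub_pos_of_Mmat_pos (hM : ∀ i j, 0 < Mmat θ Δ i j) : 0 < 1 - θ := by
  rw [← Mmat_zero_one_add_Mmat_one_zero]
  exact add_pos (hM 0 1) (hM 1 0)

lemma Mmat_eq_mix (hθ : θ ≠ 1) (i k : Fin 2) :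
    Mmat θ Δ i k = (1 - θ) * pst θ Δ k + if i = k then θ else 0 := by
  have : 1 - θ ≠ 0 := sub_ne_zero.mpr hθ.symm
  fin_cases i <;> fin_cases k <;> simp [Mmat, pst] <;> field_simp <;> ring

lemma pst_pos (hM : ∀ i j, 0 < Mmat θ Δ i j) (i : Fin 2) : 0 < pst θ Δ i := by
  have h1θ := one_sub_pos_of_Mmat_pos hM
  have hoff : Mmat θ Δ (i + 1) i = (1 - θ) * pst θ Δ i := by
    rw [Mmat_eq_mix (by linarith), if_neg (by fin_cases i <;> decide), add_zero]
  exact pos_of_mul_pos_right (hoff ▸ hM (i + 1) i) h1θ.le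

end Channel

section Tree

variable {d n : ℕ}

def child (j : Fin d) (σ : Conf d (n + 1)) : Conf d n :=
  fun k w => σ k.succ (Fin.cons j w)

def glue (i : Fin 2) (τ : Fin d → Conf d n) : Conf d (n + 1) :=
  Fin.cases (motive := fun k => Vert d k → Fin 2) (fun _ => i)
    fun k (v : Fin (k + 1) → Fin d) => τ (v 0) k (Fin.tail v)

@[simp] lemma root_glue (i : Fin 2) (τ : Fin d → Conf d n) : root (glue i τ) = i := rfl

@[simp] lemma child_glue (j : Fin d) (i : Fin 2) (τ : Fin d → Conf d n) :
    child j (glue i τ) = τ j := rfl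

lemma glue_root_child (σ : Conf d (n + 1)) : glue (root σ) (fun j => child j σ) = σ := by
  funext k v
  induction k using Fin.cases with
  | zero => exact congrArg (σ 0) (funext fun i => i.elim0)
  | succ k => exact congrArg (σ k.succ) (Fin.cons_self_tail v)

def confEquiv (d n : ℕ) : Conf d (n + 1) ≃ Fin 2 × (Fin d → Conf d n) where
  toFun σ := (root σ, fun j => child j σ)
  invFun p := glue p.1 p.2
  left_inv := glue_root_child
  right_inv _ := rfl

def lconfEquiv (d n : ℕ) : LConf d (n + 1) ≃ (Fin d → LConf d n) where
  toFun A j := restrictChild j A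
  invFun B v := B (v 0) (Fin.tail v)
  left_inv A := funext fun v => congrArg A (Fin.cons_self_tail v)
  right_inv _ := rfl

def conf0Equiv : Conf d 0 ≃ Fin 2 where
  toFun := root
  invFun i _ _ := i
  left_inv σ := by
    funext k v
    obtain rfl : k = 0 := Fin.fin_one_eq_zero k
    exact congrArg (σ 0) (funext fun i => i.elim0)
  right_inv _ := rfl

@[simp] lemma confEquiv_symm_apply (p : Fin 2 × (Fin d → Conf d n)) :
    (confEquiv d n).symm p = glue p.1 p.2 := rfl

lemma top_glue_eq_iff (i : Fin 2) (τ : Fin d → Conf d n) (A : LConf d (n + 1)) :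
    top (glue i τ) = A ↔ ∀ j, top (τ j) = restrictChild j A := by
  change (lconfEquiv d n).symm (fun j => top (τ j)) = A ↔ _
  rw [Equiv.symm_apply_eq, funext_iff]
  rfl

end Tree

section Weight

variable (θ Δ : ℝ) {d : ℕ}

noncomputable def treeWeight (n : ℕ) (σ : Conf d n) : ℝ :=
  ∏ k : Fin n, ∏ v : Vert d (k + 1),
    Mmat θ Δ (σ k.castSucc (v ∘ Fin.castSucc)) (σ k.succ v)

lemma confProb_eq (n : ℕ) (σ : Conf d n) :
    confProb d θ Δ n σ = pst θ Δ (root σ) * treeWeight θ Δ n σ := rfl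

lemma prod_vert_succ {M : Type*} [CommMonoid M] {m : ℕ} (g : Vert d (m + 1) → M) :
    ∏ v, g v = ∏ j : Fin d, ∏ w : Vert d m, g (Fin.cons j w) := by
  rw [← Fintype.prod_prod_type', ← (Fin.consEquiv fun _ => Fin d).prod_comp]
  rfl

lemma treeWeight_glue {n : ℕ} (i : Fin 2) (τ : Fin d → Conf d n) :
    treeWeight θ Δ (n + 1) (glue i τ) =
      ∏ j, Mmat θ Δ i (root (τ j)) * treeWeight θ Δ n (τ j) := by
  rw [treeWeight, Fin.prod_univ_succ, Finset.prod_mul_distrib, prod_vert_succ]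
  congr 1
  · refine Fintype.prod_congr _ _ fun j => ?_
    exact Fintype.prod_subsingleton (ι := Vert d 0) _ Fin.elim0
  · simp_rw [prod_vert_succ]
    rw [Finset.prod_comm]
    rfl

end Weight

section Law

variable (θ Δ : ℝ) {d : ℕ}

/-- `P(σ(n) = B ∣ σ_ρ = i)`, computed without the division by `π_i` used in `condLevel`. -/
noncomputable def condLaw (n : ℕ) (i : Fin 2) (B : LConf d n) : ℝ :=
  ∑ σ : Conf d n, if root σ = i ∧ top σ = B then treeWeight θ Δ n σ else 0

lemma jointProb_eq_mul_condLaw (n : ℕ) (i : Fin 2) (B : LConf d n) :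
    jointProb d θ Δ n i B = pst θ Δ i * condLaw θ Δ n i B := by
  rw [jointProb, condLaw, Finset.mul_sum]
  refine Fintype.sum_congr _ _ fun σ => ?_
  split_ifs with h
  · rw [confProb_eq, h.1]
  · rw [mul_zero]

lemma sum_top_eq_sum_condLaw {n : ℕ} (i : Fin 2) (B : LConf d n) :
    ∑ σ : Conf d n, (if top σ = B then Mmat θ Δ i (root σ) * treeWeight θ Δ n σ else 0) =
      ∑ k, Mmat θ Δ i k * condLaw θ Δ n k B := by
  simp only [condLaw, Finset.mul_sum, ite_and, mul_ite, mul_zero]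
  rw [Finset.sum_comm]
  refine Fintype.sum_congr _ _ fun σ => ?_
  split_ifs <;> simp_all

lemma condLaw_succ {n : ℕ} (i : Fin 2) (A : LConf d (n + 1)) :
    condLaw θ Δ (n + 1) i A =
      ∏ j, ∑ k, Mmat θ Δ i k * condLaw θ Δ n k (restrictChild j A) := by
  simp_rw [← sum_top_eq_sum_condLaw, Fintype.prod_sum, Fintype.prod_ite_zero]
  rw [condLaw, ← (confEquiv d n).symm.sum_comp, Fintype.sum_prod_type]
  simp only [confEquiv_symm_apply, root_glue, top_glue_eq_iff, treeWeight_glue, ite_and]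
  rw [Fintype.sum_eq_single i fun k hk => by simp [hk]]
  simp only [if_true]
  -- the two sides differ only in the `Decidable` instance of `∀ j, …`
  convert rfl

lemma sum_condLaw_zero (i : Fin 2) : ∑ B : LConf d 0, condLaw θ Δ 0 i B = 1 := by
  simp only [condLaw, treeWeight, Finset.univ_eq_empty, Finset.prod_empty]
  rw [Finset.sum_comm]
  simp only [ite_and, Finset.sum_ite_irrel, Finset.sum_ite_eq, Finset.mem_univ, if_true,
    Finset.sum_const_zero]
  rw [Fintype.sum_equiv conf0Equiv (fun σ => if root σ = i then (1 : ℝ) else 0)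
    (fun k => if k = i then 1 else 0) fun _ => rfl]
  simp

lemma sum_condLaw (n : ℕ) (i : Fin 2) : ∑ B : LConf d n, condLaw θ Δ n i B = 1 := by
  induction n generalizing i with
  | zero => exact sum_condLaw_zero θ Δ i
  | succ n ih =>
    simp_rw [condLaw_succ, ← (lconfEquiv d n).symm.sum_comp]
    change ∑ B : Fin d → LConf d n, ∏ j, ∑ k, Mmat θ Δ i k * condLaw θ Δ n k (B j) = 1
    rw [← Fintype.prod_sum fun _ B => ∑ k, Mmat θ Δ i k * condLaw θ Δ n k B]
    refine Finset.prod_eq_one fun j _ => ?_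
    rw [Finset.sum_comm]
    simp_rw [← Finset.mul_sum, ih, mul_one]
    exact Mmat_row_sum θ Δ i

end Law

section Posterior

variable {d : ℕ} {θ Δ : ℝ} {n : ℕ}

lemma condLevel_eq_condLaw (hM : ∀ i j, 0 < Mmat θ Δ i j) (i : Fin 2) (B : LConf d n) :
    condLevel d θ Δ n i B = condLaw θ Δ n i B := by
  rw [condLevel, jointProb_eq_mul_condLaw, mul_div_cancel_left₀ _ (pst_pos hM i).ne']

lemma jointProb_nonneg (hM : ∀ i j, 0 < Mmat θ Δ i j) (i : Fin 2) (B : LConf d n) :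
    0 ≤ jointProb d θ Δ n i B :=
  Finset.sum_nonneg fun σ _ => by
    split_ifs
    · exact mul_nonneg (pst_pos hM _).le (Finset.prod_nonneg fun _ _ =>
        Finset.prod_nonneg fun _ _ => (hM _ _).le)
    · exact le_rfl

lemma levelProb_eq_sum_jointProb (B : LConf d n) :
    levelProb d θ Δ n B = ∑ i, jointProb d θ Δ n i B := by
  simp only [levelProb, jointProb]
  rw [Finset.sum_comm]
  refine Fintype.sum_congr _ _ fun σ => ?_
  simp [ite_and]

/-- Also where `P(σ(n) = B) = 0` and `post` is the junk value `0 / 0 = 0`: the joint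
probability vanishes there too. -/
lemma levelProb_mul_post (hM : ∀ i j, 0 < Mmat θ Δ i j) (i : Fin 2) (B : LConf d n) :
    levelProb d θ Δ n B * post d θ Δ n i B = jointProb d θ Δ n i B := by
  by_cases h : levelProb d θ Δ n B = 0
  · have hle : jointProb d θ Δ n i B ≤ levelProb d θ Δ n B := by
      rw [levelProb_eq_sum_jointProb]
      exact Finset.single_le_sum (fun k _ => jointProb_nonneg hM k B) (Finset.mem_univ i)
    rw [h, zero_mul]
    exact (le_antisymm (h ▸ hle) (jointProb_nonneg hM i B)).symm
  · exact mul_div_cancel₀ _ h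

lemma sum_jointProb (i : Fin 2) : ∑ B : LConf d n, jointProb d θ Δ n i B = pst θ Δ i := by
  simp_rw [jointProb_eq_mul_condLaw, ← Finset.mul_sum, sum_condLaw, mul_one]

lemma sum_levelProb : ∑ B : LConf d n, levelProb d θ Δ n B = 1 := by
  simp_rw [levelProb_eq_sum_jointProb]
  rw [Finset.sum_comm]
  simp_rw [sum_jointProb, sum_pst]

lemma sum_condLevel (hM : ∀ i j, 0 < Mmat θ Δ i j) (i : Fin 2) :
    ∑ B : LConf d n, condLevel d θ Δ n i B = 1 := by
  simp_rw [condLevel_eq_condLaw hM, sum_condLaw]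

lemma sum_levelProb_mul_post_sub (hM : ∀ i j, 0 < Mmat θ Δ i j) :
    ∑ B : LConf d n, levelProb d θ Δ n B * (post d θ Δ n 0 B - pst θ Δ 0) = 0 := by
  simp_rw [mul_sub, levelProb_mul_post hM]
  rw [Finset.sum_sub_distrib, ← Finset.sum_mul, sum_jointProb, sum_levelProb, one_mul, sub_self]

lemma expect1_post_sub (hM : ∀ i j, 0 < Mmat θ Δ i j) :
    expect1 d θ Δ n (fun B => post d θ Δ n 0 B - pst θ Δ 0) = xseq d θ Δ n := by
  simp_rw [xseq, expect1, mul_sub]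
  rw [Finset.sum_sub_distrib, ← Finset.sum_mul, sum_condLevel hM, one_mul]

lemma sum_levelProb_mul_post_sub_sq (hM : ∀ i j, 0 < Mmat θ Δ i j) :
    ∑ B : LConf d n, levelProb d θ Δ n B * (post d θ Δ n 0 B - pst θ Δ 0) ^ 2 =
      pst θ Δ 0 * xseq d θ Δ n := by
  have hexp : ∀ B : LConf d n, levelProb d θ Δ n B * (post d θ Δ n 0 B - pst θ Δ 0) ^ 2 =
      pst θ Δ 0 * (condLevel d θ Δ n 0 B * (post d θ Δ n 0 B - pst θ Δ 0)) -
        pst θ Δ 0 * (levelProb d θ Δ n B * (post d θ Δ n 0 B - pst θ Δ 0)) := by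
    intro B
    have h := levelProb_mul_post hM 0 B
    rw [jointProb_eq_mul_condLaw, ← condLevel_eq_condLaw hM] at h
    linear_combination (post d θ Δ n 0 B - pst θ Δ 0) * h
  rw [Fintype.sum_congr _ _ hexp, Finset.sum_sub_distrib, ← Finset.mul_sum, ← Finset.mul_sum,
    sum_levelProb_mul_post_sub hM, ← expect1, expect1_post_sub hM, mul_zero, sub_zero]

end Posterior

section Subtree

variable {d : ℕ} {θ Δ : ℝ} {n : ℕ}

lemma sum_Mmat_mul_condLaw (hM : ∀ i j, 0 < Mmat θ Δ i j) (i : Fin 2) (B : LConf d n) :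
    ∑ k, Mmat θ Δ i k * condLaw θ Δ n k B =
      (1 - θ) * levelProb d θ Δ n B + θ * condLevel d θ Δ n i B := by
  have hθ : θ ≠ 1 := by linarith [one_sub_pos_of_Mmat_pos hM]
  simp_rw [levelProb_eq_sum_jointProb, jointProb_eq_mul_condLaw, condLevel_eq_condLaw hM,
    Mmat_eq_mix hθ, add_mul, Finset.sum_add_distrib, Finset.mul_sum, mul_assoc, ite_mul,
    zero_mul, Finset.sum_ite_eq, Finset.mem_univ, if_true]

lemma expect1_restrictChild (hM : ∀ i j, 0 < Mmat θ Δ i j) (g : LConf d n → ℝ) (j : Fin d) :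
    expect1 d θ Δ (n + 1) (fun A => g (restrictChild j A)) =
      (1 - θ) * ∑ B, levelProb d θ Δ n B * g B + θ * expect1 d θ Δ n g := by
  have hq : ∑ B : LConf d n, ∑ k, Mmat θ Δ 0 k * condLaw θ Δ n k B = 1 := by
    rw [Finset.sum_comm]
    simp_rw [← Finset.mul_sum, sum_condLaw, mul_one, Mmat_row_sum]
  rw [expect1]
  simp_rw [condLevel_eq_condLaw hM, condLaw_succ, ← (lconfEquiv d n).symm.sum_comp]
  change ∑ B : Fin d → LConf d n, (∏ j, ∑ k, Mmat θ Δ 0 k * condLaw θ Δ n k (B j)) * g (B j) = _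
  rw [Fintype.sum_pi_prod_mul_apply (fun _ B => ∑ k, Mmat θ Δ 0 k * condLaw θ Δ n k B) fun _ => hq]
  simp_rw [sum_Mmat_mul_condLaw hM, add_mul, Finset.sum_add_distrib, mul_assoc, ← Finset.mul_sum]
  rfl

end Subtree

theorem Yfun_moments_general (d : ℕ) (θ Δ : ℝ) (hM : ∀ i j, 0 < Mmat θ Δ i j) :
    ∀ (j : Fin d) (n : ℕ),
      expect1 d θ Δ (n + 1) (fun A => Yfun d θ Δ n j A - pst θ Δ 0) = θ * xseq d θ Δ n ∧
      expect1 d θ Δ (n + 1) (fun A => (Yfun d θ Δ n j A - pst θ Δ 0) ^ 2) =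
        θ * zseq d θ Δ n + pst θ Δ 0 * (1 - θ) * xseq d θ Δ n := by
  intro j n
  refine ⟨(expect1_restrictChild hM (fun B => post d θ Δ n 0 B - pst θ Δ 0) j).trans ?_,
    (expect1_restrictChild hM (fun B => (post d θ Δ n 0 B - pst θ Δ 0) ^ 2) j).trans ?_⟩
  · rw [sum_levelProb_mul_post_sub hM, expect1_post_sub hM]
    ring
  · rw [sum_levelProb_mul_post_sub_sq hM, zseq]
    ring

/-- For each `1 ≤ j ≤ d` and every `n ≥ 0`,
`E[Y_j − π₁] = θ x_n` and `E[(Y_j − π₁)²] = θ z_n + π₁(1−θ) x_n`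
(expectations under the conditioning `σ_ρ = 1`). -/
theorem Yfun_moments (d : ℕ) (hd : 2 ≤ d) (θ Δ : ℝ) (hθ0 : θ ≠ 0) (hθ1 : |θ| < 1)
    (hθΔ : |θ| + |Δ| ≤ 1) (hM : ∀ i j, 0 < Mmat θ Δ i j)
    (hord : pst θ Δ 1 ≤ pst θ Δ 0) :
    ∀ (j : Fin d) (n : ℕ),
      expect1 d θ Δ (n + 1) (fun A => Yfun d θ Δ n j A - pst θ Δ 0) = θ * xseq d θ Δ n ∧
      expect1 d θ Δ (n + 1) (fun A => (Yfun d θ Δ n j A - pst θ Δ 0) ^ 2) =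
        θ * zseq d θ Δ n + pst θ Δ 0 * (1 - θ) * xseq d θ Δ n :=
  Yfun_moments_general d θ Δ hM

end AsymIsing
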